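/- arXiv:1711.04187 — 5 statements merged into one kernel-verified Lean document; each statement's English description precedes it below -/
import Mathlib

section
/- Let A be an n×n symmetric positive definite matrix with bandwidth β_A and D an n×n symmetric matrix with bandwidth β_D. If the conjugate gradient method is applied to the Lyapunov equation AX+XA=D with initial guess X_0=0, then all iterates after k steps are banded: the search-update matrix W_k has bandwidth at most kβ_A+β_D, the iterate X_k has bandwidth at most (k-1)β_A+β_D, the residual R_k has bandwidth at most kβ_A+β_D, and the direction P_k has bandwidth at most kβ_A+β_D. -/
/-- A matrix `M` is `β`-banded if `M i j = 0` whenever `|i - j| > β`. -/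
def Matrix.IsBanded {n : ℕ} (β : ℕ) (M : Matrix (Fin n) (Fin n) ℝ) : Prop :=
  ∀ i j : Fin n, (β : ℤ) < |(i : ℤ) - (j : ℤ)| → M i j = 0

/-- The Frobenius (trace) inner product `⟨X, Y⟩_F = trace (Yᵀ X)`. -/
noncomputable def frobInner {n : ℕ} (X Y : Matrix (Fin n) (Fin n) ℝ) : ℝ :=
  Matrix.trace (Y.transpose * X)

lemma Matrix.IsBanded.mono {n : ℕ} {β β' : ℕ} {M : Matrix (Fin n) (Fin n) ℝ}
    (h : Matrix.IsBanded β M) (hle : β ≤ β') : Matrix.IsBanded β' M := by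
  intro i j hij
  exact h i j (lt_of_le_of_lt (by exact_mod_cast hle) hij)

lemma Matrix.IsBanded.add {n : ℕ} {β : ℕ} {M N : Matrix (Fin n) (Fin n) ℝ}
    (hM : Matrix.IsBanded β M) (hN : Matrix.IsBanded β N) :
    Matrix.IsBanded β (M + N) := by
  intro i j hij
  simp [Matrix.add_apply, hM i j hij, hN i j hij]

lemma Matrix.IsBanded.sub {n : ℕ} {β : ℕ} {M N : Matrix (Fin n) (Fin n) ℝ}
    (hM : Matrix.IsBanded β M) (hN : Matrix.IsBanded β N) :
    Matrix.IsBanded β (M - N) := by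
  intro i j hij
  simp [Matrix.sub_apply, hM i j hij, hN i j hij]

lemma Matrix.IsBanded.smul {n : ℕ} {β : ℕ} {c : ℝ} {M : Matrix (Fin n) (Fin n) ℝ}
    (hM : Matrix.IsBanded β M) : Matrix.IsBanded β (c • M) := by
  intro i j hij
  simp [Matrix.smul_apply, hM i j hij]

lemma Matrix.IsBanded.mul {n : ℕ} {β γ : ℕ} {M N : Matrix (Fin n) (Fin n) ℝ}
    (hM : Matrix.IsBanded β M) (hN : Matrix.IsBanded γ N) :
    Matrix.IsBanded (β + γ) (M * N) := by
  intro i j hij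
  rw [Matrix.mul_apply]
  apply Finset.sum_eq_zero
  intro k _
  by_cases h : (β : ℤ) < |(i : ℤ) - (k : ℤ)|
  · rw [hM i k h, zero_mul]
  · have hk : (γ : ℤ) < |(k : ℤ) - (j : ℤ)| := by
      push_neg at h
      have htri : |(i : ℤ) - (j : ℤ)| ≤ |(i : ℤ) - (k : ℤ)| + |(k : ℤ) - (j : ℤ)| := by
        have := abs_sub_abs_le_abs_sub ((i : ℤ) - k) ((j : ℤ) - k)
        calc |(i : ℤ) - (j : ℤ)| = |((i : ℤ) - k) - ((j : ℤ) - k)| := by ring_nf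
          _ ≤ |(i : ℤ) - (k : ℤ)| + |(k : ℤ) - (j : ℤ)| := by
              rw [abs_sub_comm ((k:ℤ)) ((j:ℤ))]; exact abs_sub _ _
      push_cast at hij
      omega
    rw [hN k j hk, mul_zero]

/-- Bandedness of the iterates of the matrix-oriented CG method applied to the
Lyapunov equation `A X + X A = D` with initial guess `X₀ = 0`. -/
theorem cg_lyapunov_iterates_banded {n : ℕ} (βA βD : ℕ)
    (A D : Matrix (Fin n) (Fin n) ℝ)
    (hA : A.PosDef) (hAband : Matrix.IsBanded βA A)
    (hD : D.IsSymm) (hDband : Matrix.IsBanded βD D)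
    (W X R P : ℕ → Matrix (Fin n) (Fin n) ℝ) (α β : ℕ → ℝ)
    (hX0 : X 0 = 0) (hR0 : R 0 = D) (hP0 : P 0 = D)
    (hW : ∀ k, W (k + 1) = A * P k + P k * A)
    (hα : ∀ k, α (k + 1) = frobInner (R k) (R k) / frobInner (P k) (W (k + 1)))
    (hX : ∀ k, X (k + 1) = X k + α (k + 1) • P k)
    (hR : ∀ k, R (k + 1) = R k - α (k + 1) • W (k + 1))
    (hβ : ∀ k, β (k + 1) = frobInner (R (k + 1)) (R (k + 1)) / frobInner (R k) (R k))
    (hP : ∀ k, P (k + 1) = R (k + 1) + β (k + 1) • P k) :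
    ∀ k : ℕ, 1 ≤ k →
      Matrix.IsBanded (k * βA + βD) (W k) ∧
      Matrix.IsBanded ((k - 1) * βA + βD) (X k) ∧
      Matrix.IsBanded (k * βA + βD) (R k) ∧
      Matrix.IsBanded (k * βA + βD) (P k) := by
  intro k hk
  induction k with
  | zero => omega
  | succ k ih =>
    rcases Nat.eq_zero_or_pos k with rfl | hk1
    · -- base case k = 1
      have hW1 : Matrix.IsBanded (1 * βA + βD) (W 1) := by
        rw [hW 0, hP0, one_mul]
        exact (hAband.mul hDband).add ((hDband.mul hAband).mono (by omega))
      have hR1 : Matrix.IsBanded (1 * βA + βD) (R 1) := by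
        rw [hR 0, hR0]
        exact (hDband.mono (by omega)).sub hW1.smul
      refine ⟨hW1, ?_, hR1, ?_⟩
      · rw [hX 0, hX0, zero_add]
        rw [hP0]; simpa using (hDband.smul : Matrix.IsBanded βD (α 1 • D))
      · rw [hP 0, hP0]
        exact hR1.add ((hDband.smul).mono (by omega))
    · obtain ⟨hWk, hXk, hRk, hPk⟩ := ih hk1
      have hW1 : Matrix.IsBanded ((k + 1) * βA + βD) (W (k + 1)) := by
        rw [hW k]
        have h1 : Matrix.IsBanded (βA + (k * βA + βD)) (A * P k) := hAband.mul hPk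
        have h2 : Matrix.IsBanded ((k * βA + βD) + βA) (P k * A) := hPk.mul hAband
        exact (h1.mono (by ring_nf; omega)).add (h2.mono (by ring_nf; omega))
      have hR1 : Matrix.IsBanded ((k + 1) * βA + βD) (R (k + 1)) := by
        rw [hR k]
        exact (hRk.mono (by nlinarith)).sub hW1.smul
      refine ⟨hW1, ?_, hR1, ?_⟩
      · rw [hX k]
        have : k + 1 - 1 = k := by omega
        rw [this]
        exact (hXk.mono (by have := Nat.sub_le k 1; exact Nat.add_le_add_right (Nat.mul_le_mul_right _ this) _)).add hPk.smul
      · rw [hP k]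
        exact hR1.add (hPk.smul.mono (by nlinarith))
end

section
/- Let A be an n×n symmetric positive definite matrix with eigenvalues λ_1 ≥ … ≥ λ_n > 0, D symmetric, and X the solution of AX+XA=D. For any 1 ≤ ℓ̄ < n and τ > 0, there exists a matrix X_L of rank at most ℓ̄ such that ‖e^{-τA} X e^{-τA} − X_L‖_2² ≤ (3/(4λ_n²)) e^{-2τ(λ_n + λ_{n−ℓ̄})} ‖D‖_F². -/
/-!
In the eigenbasis of `A` the Lyapunov equation decouples: `Y = Qᵀ X Q` has entries
`(Qᵀ D Q)ᵢⱼ / (μᵢ + μⱼ)`, and `e^{-τA} X e^{-τA}` becomes `G = F Y F` with `F = diag (e^{-τμᵢ})`.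
Keeping only the trailing `ℓ × ℓ` block of `G` (the `ℓ` smallest eigenvalues) gives a matrix of
rank at most `ℓ`. Every discarded entry has `μᵢ, μⱼ ≥ μₙ₋₁` and one of its indices below `n - ℓ`,
so `μᵢ + μⱼ ≥ μₙ₋₁ + μₙ₋ₗ₋₁` and the entry is at most `e^{-τ(μₙ₋₁ + μₙ₋ₗ₋₁)} / (2 μₙ₋₁)` times
`|(Qᵀ D Q)ᵢⱼ|`. The spectral norm is bounded by the Frobenius norm, which is invariant under
orthogonal conjugation.
-/

open Matrix

/-- The Frobenius norm of a real matrix. -/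
noncomputable def frobNorm {n : ℕ} (M : Matrix (Fin n) (Fin n) ℝ) : ℝ :=
  Real.sqrt (∑ i, ∑ j, (M i j) ^ 2)

/-- The spectral (ℓ²-operator) norm of a real matrix. -/
noncomputable def l2Norm {n : ℕ} (M : Matrix (Fin n) (Fin n) ℝ) : ℝ :=
  ‖Matrix.toEuclideanCLM (𝕜 := ℝ) M‖

theorem Fin.card_filter_le_val (n m : ℕ) :
    (Finset.univ.filter fun i : Fin n => m ≤ (i : ℕ)).card = n - m := by
  have := Finset.card_filter_add_card_filter_not (s := Finset.univ) fun i : Fin n => (i : ℕ) < m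
  simp only [Fin.card_filter_val_lt, not_lt, Finset.card_univ, Fintype.card_fin] at this
  omega

section Norms

variable {n : ℕ}

theorem frobNorm_sq (M : Matrix (Fin n) (Fin n) ℝ) : frobNorm M ^ 2 = ∑ i, ∑ j, M i j ^ 2 :=
  Real.sq_sqrt (by positivity)

theorem frobNorm_sq_le_of_sq_le {M N : Matrix (Fin n) (Fin n) ℝ} {c : ℝ}
    (h : ∀ i j, M i j ^ 2 ≤ c * N i j ^ 2) : frobNorm M ^ 2 ≤ c * frobNorm N ^ 2 := by
  simp only [frobNorm_sq, Finset.mul_sum]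
  exact Finset.sum_le_sum fun i _ => Finset.sum_le_sum fun j _ => h i j

theorem frobNorm_sq_eq_trace (M : Matrix (Fin n) (Fin n) ℝ) :
    frobNorm M ^ 2 = (M * Mᵀ).trace := by
  rw [frobNorm_sq]
  simp [trace, mul_apply, sq]

theorem frobNorm_orthogonal_conj {Q : Matrix (Fin n) (Fin n) ℝ} (hQ : Qᵀ * Q = 1)
    (M : Matrix (Fin n) (Fin n) ℝ) : frobNorm (Q * M * Qᵀ) = frobNorm M := by
  have hsq : frobNorm (Q * M * Qᵀ) ^ 2 = frobNorm M ^ 2 := by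
    rw [frobNorm_sq_eq_trace, frobNorm_sq_eq_trace, transpose_mul, transpose_mul,
      transpose_transpose]
    calc (Q * M * Qᵀ * (Q * (Mᵀ * Qᵀ))).trace = (Q * (M * Mᵀ * Qᵀ)).trace := by
          rw [Matrix.mul_assoc, ← Matrix.mul_assoc Qᵀ, hQ, Matrix.one_mul]
          simp only [Matrix.mul_assoc]
      _ = (M * Mᵀ * Qᵀ * Q).trace := by rw [trace_mul_comm]
      _ = (M * Mᵀ).trace := by rw [Matrix.mul_assoc, hQ, Matrix.mul_one]
  exact (sq_eq_sq₀ (Real.sqrt_nonneg _) (Real.sqrt_nonneg _)).mp hsq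

theorem l2Norm_le_frobNorm (M : Matrix (Fin n) (Fin n) ℝ) : l2Norm M ≤ frobNorm M := by
  refine ContinuousLinearMap.opNorm_le_bound _ (Real.sqrt_nonneg _) fun x => ?_
  have hMx : ∀ i, toEuclideanCLM (𝕜 := ℝ) M x i = ∑ j, M i j * x j := fun i => by
    simp [ofLp_toEuclideanCLM, mulVec, dotProduct]
  simp only [EuclideanSpace.norm_eq, Real.norm_eq_abs, sq_abs, hMx, frobNorm]
  rw [← Real.sqrt_mul (by positivity), Finset.sum_mul]
  exact Real.sqrt_le_sqrt <| Finset.sum_le_sum fun i _ => Finset.sum_mul_sq_le_sq_mul_sq _ _ _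

theorem l2Norm_sq_orthogonal_conj_le {Q M N : Matrix (Fin n) (Fin n) ℝ} {c : ℝ}
    (hQ₁ : Qᵀ * Q = 1) (hQ₂ : Q * Qᵀ = 1) (h : ∀ i j, M i j ^ 2 ≤ c * (Qᵀ * N * Q) i j ^ 2) :
    l2Norm (Q * M * Qᵀ) ^ 2 ≤ c * frobNorm N ^ 2 :=
  calc l2Norm (Q * M * Qᵀ) ^ 2 ≤ frobNorm (Q * M * Qᵀ) ^ 2 :=
        pow_le_pow_left₀ (norm_nonneg _) (l2Norm_le_frobNorm _) 2
    _ = frobNorm M ^ 2 := by rw [frobNorm_orthogonal_conj hQ₁]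
    _ ≤ c * frobNorm (Qᵀ * N * Qᵀᵀ) ^ 2 := by
        rw [transpose_transpose]
        exact frobNorm_sq_le_of_sq_le h
    _ = c * frobNorm N ^ 2 := by
        rw [frobNorm_orthogonal_conj (by rwa [transpose_transpose])]

end Norms

theorem sq_exp_mul_div_mul_exp_le {a b τ x y : ℝ} (ha : 0 < a) (hτ : 0 ≤ τ) (hx : a ≤ x)
    (hy : a ≤ y) (hxy : a + b ≤ x + y) (d : ℝ) :
    (Real.exp (-(τ * x)) * (d / (x + y)) * Real.exp (-(τ * y))) ^ 2 ≤
      Real.exp (-2 * τ * (a + b)) / (4 * a ^ 2) * d ^ 2 := by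
  have hexp : Real.exp (-(τ * x)) * (d / (x + y)) * Real.exp (-(τ * y)) =
      Real.exp (-(τ * (x + y))) / (x + y) * d := by
    rw [mul_add, neg_add, Real.exp_add]
    ring
  have hnum : Real.exp (-(τ * (x + y))) ^ 2 ≤ Real.exp (-2 * τ * (a + b)) := by
    rw [← Real.exp_nat_mul, Real.exp_le_exp]
    push_cast
    nlinarith [mul_le_mul_of_nonneg_left hxy hτ]
  have hden : 4 * a ^ 2 ≤ (x + y) ^ 2 := by nlinarith
  rw [hexp, mul_pow, div_pow]
  gcongr

section Spectral

variable {m : Type*} [Fintype m] [DecidableEq m]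

theorem Matrix.exp_orthogonal_conj_diagonal {Q : Matrix m m ℝ} (hQ₁ : Qᵀ * Q = 1)
    (hQ₂ : Q * Qᵀ = 1) (d : m → ℝ) :
    NormedSpace.exp (Q * diagonal d * Qᵀ) = Q * diagonal (fun i => Real.exp (d i)) * Qᵀ := by
  have hexp : NormedSpace.exp d = fun i => Real.exp (d i) := by
    funext i
    simp [← Real.exp_eq_exp_ℝ]
  simpa [hexp, exp_diagonal] using exp_units_conj ⟨Q, Qᵀ, hQ₂, hQ₁⟩ (diagonal d)

theorem Matrix.diagonal_lyapunov_apply {μ : m → ℝ} {Y C : Matrix m m ℝ}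
    (h : diagonal μ * Y + Y * diagonal μ = C) {i j : m} (hij : μ i + μ j ≠ 0) :
    Y i j = C i j / (μ i + μ j) := by
  rw [eq_div_iff hij, ← h]
  simp only [add_apply, diagonal_mul, mul_diagonal]
  ring

theorem Matrix.lyapunov_orthogonal_conj {Q A X D : Matrix m m ℝ} {μ : m → ℝ}
    (hQ : Qᵀ * Q = 1) (hA : A = Q * diagonal μ * Qᵀ) (hX : A * X + X * A = D) :
    diagonal μ * (Qᵀ * X * Q) + (Qᵀ * X * Q) * diagonal μ = Qᵀ * D * Q := by
  have hcancel : ∀ M : Matrix m m ℝ, Qᵀ * (Q * M) = M := fun M => by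
    rw [← Matrix.mul_assoc, hQ, Matrix.one_mul]
  subst hA hX
  simp only [Matrix.mul_add, Matrix.add_mul, Matrix.mul_assoc, hcancel, hQ, Matrix.mul_one]

theorem Matrix.exp_lyapunov_orthogonal_conj {Q A X D : Matrix m m ℝ} {μ : m → ℝ}
    (hQ₁ : Qᵀ * Q = 1) (hQ₂ : Q * Qᵀ = 1) (hA : A = Q * diagonal μ * Qᵀ)
    (hμ : ∀ i j, μ i + μ j ≠ 0) (hX : A * X + X * A = D) (τ : ℝ) :
    NormedSpace.exp (-(τ • A)) * X * NormedSpace.exp (-(τ • A)) =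
      Q * of (fun i j => Real.exp (-(τ * μ i)) * ((Qᵀ * D * Q) i j / (μ i + μ j)) *
        Real.exp (-(τ * μ j))) * Qᵀ := by
  set F := diagonal fun i => Real.exp (-(τ * μ i))
  have hexp : NormedSpace.exp (-(τ • A)) = Q * F * Qᵀ := by
    have hdiag : (diagonal fun i => -(τ * μ i)) = -(τ • diagonal μ) := by
      rw [← diagonal_smul, ← diagonal_neg]
      rfl
    rw [← exp_orthogonal_conj_diagonal hQ₁ hQ₂, hdiag, hA, Matrix.mul_neg, Matrix.neg_mul,
      Matrix.mul_smul, Matrix.smul_mul]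
  have hFYF : F * (Qᵀ * X * Q) * F = of fun i j =>
      Real.exp (-(τ * μ i)) * ((Qᵀ * D * Q) i j / (μ i + μ j)) * Real.exp (-(τ * μ j)) := by
    ext i j
    simp only [F, diagonal_mul, mul_diagonal, of_apply,
      diagonal_lyapunov_apply (lyapunov_orthogonal_conj hQ₁ hA hX) (hμ i j)]
  have hX' : X = Q * (Qᵀ * X * Q) * Qᵀ := by
    simp only [← Matrix.mul_assoc, hQ₂, Matrix.one_mul]
    simp only [Matrix.mul_assoc, hQ₂, Matrix.mul_one]
  have hcancel : ∀ M : Matrix m m ℝ, Qᵀ * (Q * M) = M := fun M => by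
    rw [← Matrix.mul_assoc, hQ₁, Matrix.one_mul]
  rw [hexp, ← hFYF, hX']
  simp only [Matrix.mul_assoc, hcancel]

end Spectral

section Compression

variable {m K : Type*} [Fintype m] [DecidableEq m] [Field K]

def Matrix.coordProj (S : Finset m) : Matrix m m K :=
  diagonal fun i => if i ∈ S then 1 else 0

theorem Matrix.rank_coordProj (S : Finset m) : (coordProj S : Matrix m m K).rank = S.card := by
  classical
  rw [coordProj, rank_diagonal, ← Fintype.card_coe]
  exact Fintype.card_congr (Equiv.subtypeEquivRight fun i => by split_ifs with h <;> simp [h])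

theorem Matrix.coordProj_mul_mul_coordProj_apply (S : Finset m) (G : Matrix m m K) (i j : m) :
    (coordProj S * G * coordProj S : Matrix m m K) i j = if i ∈ S ∧ j ∈ S then G i j else 0 := by
  by_cases hi : i ∈ S <;> by_cases hj : j ∈ S <;> simp [coordProj, hi, hj]

theorem Matrix.sub_coordProj_mul_mul_coordProj_apply (S : Finset m) (G : Matrix m m K) (i j : m) :
    (G - coordProj S * G * coordProj S : Matrix m m K) i j = if i ∈ S ∧ j ∈ S then 0 else G i j := by
  rw [sub_apply, coordProj_mul_mul_coordProj_apply]
  split_ifs <;> simp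

theorem Matrix.rank_mul_coordProj_mul_le (S : Finset m) (B C : Matrix m m K) :
    (B * coordProj S * C).rank ≤ S.card :=
  calc (B * coordProj S * C).rank ≤ (B * coordProj S).rank := rank_mul_le_left _ _
    _ ≤ (coordProj S : Matrix m m K).rank := rank_mul_le_right _ _
    _ = S.card := rank_coordProj S

end Compression

/-- Low-rank approximability of `e^{-τA} X e^{-τA}`, where `X` solves the
Lyapunov equation `A X + X A = D` with `A` SPD with eigenvalues
`μ 0 ≥ μ 1 ≥ … ≥ μ (n-1) > 0`. -/
theorem lowrank_approx_exp_lyapunov {n : ℕ}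
    (A D X Q : Matrix (Fin n) (Fin n) ℝ) (μ : Fin n → ℝ)
    (hQ : Q.transpose * Q = 1 ∧ Q * Q.transpose = 1)
    (hdecomp : A = Q * Matrix.diagonal μ * Q.transpose)
    (hdec : ∀ i j : Fin n, i ≤ j → μ j ≤ μ i)
    (hpos : ∀ i, 0 < μ i)
    (hX : A * X + X * A = D)
    (ℓ : ℕ) (hℓn : ℓ < n) (τ : ℝ) (hτ : 0 < τ) :
    ∃ XL : Matrix (Fin n) (Fin n) ℝ, XL.rank ≤ ℓ ∧
      (l2Norm (NormedSpace.exp (-(τ • A)) * X * NormedSpace.exp (-(τ • A)) - XL)) ^ 2 ≤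
        3 / (4 * (μ ⟨n - 1, by omega⟩) ^ 2) *
          Real.exp (-2 * τ * (μ ⟨n - 1, by omega⟩ + μ ⟨n - ℓ - 1, by omega⟩)) *
          (frobNorm D) ^ 2 := by
  obtain ⟨hQ₁, hQ₂⟩ := hQ
  set a := μ ⟨n - 1, by omega⟩
  set b := μ ⟨n - ℓ - 1, by omega⟩
  set S := Finset.univ.filter fun i : Fin n => n - ℓ ≤ (i : ℕ)
  set G : Matrix (Fin n) (Fin n) ℝ := of fun i j =>
    Real.exp (-(τ * μ i)) * ((Qᵀ * D * Q) i j / (μ i + μ j)) * Real.exp (-(τ * μ j))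
  have hconj := exp_lyapunov_orthogonal_conj hQ₁ hQ₂ hdecomp
    (fun i j => (add_pos (hpos i) (hpos j)).ne') hX τ
  refine ⟨Q * (coordProj S * G * coordProj S) * Qᵀ, ?_, ?_⟩
  · calc (Q * (coordProj S * G * coordProj S) * Qᵀ).rank
          = (Q * coordProj S * (G * coordProj S * Qᵀ)).rank := by simp only [Matrix.mul_assoc]
      _ ≤ S.card := rank_mul_coordProj_mul_le S Q _
      _ = ℓ := by rw [Fin.card_filter_le_val]; omega
  have hμa : ∀ i, a ≤ μ i := fun i => hdec i _ (Fin.le_def.mpr (by simp; omega))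
  have hμb : ∀ i ∉ S, b ≤ μ i := fun i hi =>
    hdec i _ (Fin.le_def.mpr (by simp [S] at hi ⊢; omega))
  have hentry : ∀ i j, (G - coordProj S * G * coordProj S : Matrix (Fin n) (Fin n) ℝ) i j ^ 2 ≤
      Real.exp (-2 * τ * (a + b)) / (4 * a ^ 2) * (Qᵀ * D * Q) i j ^ 2 := by
    intro i j
    rw [sub_coordProj_mul_mul_coordProj_apply]
    split_ifs with hij
    · rw [zero_pow two_ne_zero]
      positivity
    · have hab : a + b ≤ μ i + μ j := by
        rcases not_and_or.mp hij with h | h <;> linarith [hμa i, hμa j, hμb _ h]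
      exact sq_exp_mul_div_mul_exp_le (hpos _) hτ.le (hμa i) (hμa j) hab _
  calc l2Norm (NormedSpace.exp (-(τ • A)) * X * NormedSpace.exp (-(τ • A)) -
        Q * (coordProj S * G * coordProj S) * Qᵀ) ^ 2
      = l2Norm (Q * (G - coordProj S * G * coordProj S) * Qᵀ) ^ 2 := by
        rw [hconj, Matrix.mul_sub, Matrix.sub_mul]
    _ ≤ Real.exp (-2 * τ * (a + b)) / (4 * a ^ 2) * frobNorm D ^ 2 :=
        l2Norm_sq_orthogonal_conj_le hQ₁ hQ₂ hentry
    _ ≤ 3 / (4 * a ^ 2) * Real.exp (-2 * τ * (a + b)) * frobNorm D ^ 2 := by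
        gcongr ?_ * _
        rw [div_mul_eq_mul_div]
        gcongr
        linarith [Real.exp_pos (-2 * τ * (a + b))]
end

section
/- Let A be symmetric positive definite with smallest eigenvalue λ_min and largest eigenvalue λ_max, D symmetric, X the solution of AX+XA=D, and X(τ)=∫_0^τ e^{-tA}De^{-tA}dt. Then for any τ>0 and any unitarily invariant norm ‖·‖, e^{-2τλ_max} ‖X‖ ≤ ‖X − X(τ)‖ ≤ e^{-2τλ_min} ‖X‖ (assuming X ≠ 0 for the lower bound stated with X nonzero; the upper bound ‖X−X(τ)‖ ≤ e^{-2τλ_min}‖X‖ holds unconditionally). -/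
/-!
Substituting `t = s + τ` in the tail `∫_τ^∞ e^{-tA} D e^{-tA} dt` and factoring
`e^{-(s+τ)A} = e^{-τA} e^{-sA}` gives the splitting `X - X(τ) = e^{-τA} X e^{-τA}`, hence also
`X = e^{τA} (X - X(τ)) e^{τA}`. By the functional calculus `‖e^{-τA}‖ ≤ e^{-τ λ_min}` and
`‖e^{τA}‖ ≤ e^{τ λ_max}`, and submultiplicativity of the spectral norm gives both bounds.
-/

open MeasureTheory

open Set
open scoped Matrix.Norms.L2Operator

section ExpNorm

variable {𝒜 : Type*} [NormedRing 𝒜] [StarRing 𝒜] [NormedAlgebra ℝ 𝒜] [StarModule ℝ 𝒜]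
  [IsometricContinuousFunctionalCalculus ℝ 𝒜 IsSelfAdjoint] {a : 𝒜}

theorem IsSelfAdjoint.norm_exp_smul_le (ha : IsSelfAdjoint a) {s c : ℝ}
    (h : ∀ x ∈ spectrum ℝ a, s * x ≤ c) : ‖NormedSpace.exp (s • a)‖ ≤ Real.exp c := by
  have hexp : NormedSpace.exp (s • a) = cfc (fun x => Real.exp (s * x)) a := by
    rw [← CFC.exp_eq_normedSpace_exp (𝕜 := ℝ) ((IsSelfAdjoint.all s).smul ha),
      ← cfc_comp_smul s (NormedSpace.exp : ℝ → ℝ) a]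
    simp [Real.exp_eq_exp_ℝ]
  rw [hexp]
  refine norm_cfc_le (Real.exp_pos c).le fun x hx => ?_
  rw [Real.norm_eq_abs, abs_of_pos (Real.exp_pos _)]
  exact Real.exp_le_exp.mpr (h x hx)

theorem IsSelfAdjoint.norm_exp_neg_smul_le (ha : IsSelfAdjoint a) {t c : ℝ} (ht : 0 ≤ t)
    (h : ∀ x ∈ spectrum ℝ a, c ≤ x) : ‖NormedSpace.exp (-(t • a))‖ ≤ Real.exp (-(t * c)) := by
  rw [← neg_smul]
  exact ha.norm_exp_smul_le fun x hx => by nlinarith [h x hx]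

end ExpNorm

section Conjugation

variable {R : Type*} [SeminormedRing R]

theorem norm_mul_mul_le_of_norm_le {e : R} {r : ℝ} (he : ‖e‖ ≤ r) (x : R) :
    ‖e * x * e‖ ≤ r ^ 2 * ‖x‖ :=
  calc ‖e * x * e‖ ≤ ‖e‖ * ‖x‖ * ‖e‖ := norm_mul₃_le
    _ = ‖e‖ ^ 2 * ‖x‖ := by ring
    _ ≤ r ^ 2 * ‖x‖ := by gcongr

theorem norm_le_sq_mul_norm_mul_mul {e f : R} (hfe : f * e = 1) (hef : e * f = 1)
    {r : ℝ} (hf : ‖f‖ ≤ r) (x : R) : ‖x‖ ≤ r ^ 2 * ‖e * x * e‖ := by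
  have hx : f * (e * x * e) * f = x := by
    rw [← mul_assoc, ← mul_assoc, hfe, one_mul, mul_assoc, hef, mul_one]
  simpa only [hx] using norm_mul_mul_le_of_norm_le hf (e * x * e)

end Conjugation

theorem Set.Finite.exists_pos_le_of_pos {S : Set ℝ} (hS : S.Finite) (hpos : ∀ x ∈ S, 0 < x) :
    ∃ c > 0, ∀ x ∈ S, c ≤ x := by
  rcases S.eq_empty_or_nonempty with rfl | hne
  · exact ⟨1, one_pos, by simp⟩
  · exact ⟨sInf S, hpos _ (hne.csInf_mem hS), fun x hx => csInf_le hS.bddBelow hx⟩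

theorem setIntegral_Ioi_comp_add_right {E : Type*} [NormedAddCommGroup E] [NormedSpace ℝ E]
    (f : ℝ → E) (a b : ℝ) : ∫ x in Ioi a, f (x + b) = ∫ x in Ioi (a + b), f x := by
  have hpre : (· + b) ⁻¹' Ioi (a + b) = Ioi a := by
    ext x
    simp
  rw [← (measurePreserving_add_right volume b).setIntegral_preimage_emb
    (measurableEmbedding_addRight b) f, hpre]

namespace Matrix

variable {l m n p 𝕜 : Type*} [Fintype m] [Fintype n] [RCLike 𝕜]

theorem norm_apply_le_l2_opNorm [DecidableEq n] (M : Matrix m n 𝕜) (i : m) (j : n) :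
    ‖M i j‖ ≤ ‖M‖ :=
  calc ‖M i j‖ ≤ ‖WithLp.toLp 2 (M.col j)‖ := PiLp.norm_apply_le (WithLp.toLp 2 (M.col j)) i
    _ ≤ ‖M‖ := by simpa using M.l2_opNorm_mulVec (EuclideanSpace.single j 1)

theorem integral_mul_mul_apply {α : Type*} [MeasurableSpace α] {μ : Measure α}
    (P : Matrix l m 𝕜) (Q : Matrix n p 𝕜) {F : α → Matrix m n 𝕜}
    (hF : ∀ k k', Integrable (fun t => F t k k') μ) (i : l) (j : p) :
    ∫ t, (P * F t * Q) i j ∂μ = (P * of (fun k k' => ∫ t, F t k k' ∂μ) * Q) i j := by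
  simp only [mul_apply, of_apply]
  have hrow : ∀ k', Integrable (fun t => ∑ k, P i k * F t k k') μ :=
    fun k' => integrable_finsetSum _ fun k _ => (hF k k').const_mul _
  rw [integral_finsetSum _ fun k' _ => (hrow k').mul_const _]
  refine Finset.sum_congr rfl fun k' _ => ?_
  rw [integral_mul_const, integral_finsetSum _ fun k _ => (hF k k').const_mul _]
  simp_rw [integral_const_mul]

theorem PosDef.exists_pos_le_spectrum [DecidableEq m] {A : Matrix m m ℝ} (hA : A.PosDef) :
    ∃ c > 0, ∀ x ∈ spectrum ℝ A, c ≤ x := by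
  refine A.finite_real_spectrum.exists_pos_le_of_pos fun x hx => ?_
  rw [hA.isHermitian.spectrum_real_eq_range_eigenvalues] at hx
  obtain ⟨i, rfl⟩ := hx
  exact hA.eigenvalues_pos i

theorem exp_mul_exp_neg [DecidableEq m] {𝔸 : Type*} [NormedRing 𝔸] [NormedAlgebra ℚ 𝔸]
    [CompleteSpace 𝔸] (B : Matrix m m 𝔸) :
    NormedSpace.exp B * NormedSpace.exp (-B) = 1 := by
  rw [← exp_add_of_commute _ _ (Commute.refl B).neg_right, add_neg_cancel, NormedSpace.exp_zero]

end Matrix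

section Lyapunov

open Matrix

variable {m : Type*} [Fintype m] [DecidableEq m]

noncomputable def lyapunovIntegrand (A D : Matrix m m ℝ) (t : ℝ) : Matrix m m ℝ :=
  NormedSpace.exp (-(t • A)) * D * NormedSpace.exp (-(t • A))

theorem continuous_lyapunovIntegrand_apply (A D : Matrix m m ℝ) (i j : m) :
    Continuous fun t => lyapunovIntegrand A D t i j := by
  have hexp : Continuous fun t : ℝ => NormedSpace.exp (-(t • A)) := by
    simp_rw [← smul_neg]
    exact (differentiable_exp_smul_const ℝ (-A)).continuous
  exact (continuous_apply j).comp ((continuous_apply i).comp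
    ((hexp.mul continuous_const).mul hexp))

theorem lyapunovIntegrand_add (A D : Matrix m m ℝ) (s τ : ℝ) :
    lyapunovIntegrand A D (s + τ) =
      NormedSpace.exp (-(τ • A)) * lyapunovIntegrand A D s * NormedSpace.exp (-(τ • A)) := by
  have hcomm : Commute (-(s • A)) (-(τ • A)) :=
    (((Commute.refl A).smul_left s).smul_right τ).neg_left.neg_right
  have hexp : NormedSpace.exp (-((s + τ) • A)) =
      NormedSpace.exp (-(s • A)) * NormedSpace.exp (-(τ • A)) := by
    rw [add_smul, neg_add, Matrix.exp_add_of_commute _ _ hcomm]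
  have hexp' : NormedSpace.exp (-((s + τ) • A)) =
      NormedSpace.exp (-(τ • A)) * NormedSpace.exp (-(s • A)) := by
    rw [add_smul, neg_add, add_comm, Matrix.exp_add_of_commute _ _ hcomm.symm]
  simp only [lyapunovIntegrand]
  nth_rw 1 [hexp']
  rw [hexp]
  simp only [mul_assoc]

theorem integrableOn_lyapunovIntegrand_apply {A : Matrix m m ℝ} (hA : A.PosDef)
    (D : Matrix m m ℝ) (i j : m) :
    IntegrableOn (fun t => lyapunovIntegrand A D t i j) (Ioi 0) := by
  obtain ⟨c, hc, hcA⟩ := hA.exists_pos_le_spectrum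
  have hbound : ∀ t, 0 ≤ t → ‖lyapunovIntegrand A D t i j‖ ≤ Real.exp (-(2 * c) * t) * ‖D‖ := by
    intro t ht
    calc ‖lyapunovIntegrand A D t i j‖ ≤ ‖lyapunovIntegrand A D t‖ := norm_apply_le_l2_opNorm _ i j
      _ ≤ Real.exp (-(t * c)) ^ 2 * ‖D‖ :=
        norm_mul_mul_le_of_norm_le (hA.isHermitian.isSelfAdjoint.norm_exp_neg_smul_le ht hcA) D
      _ = Real.exp (-(2 * c) * t) * ‖D‖ := by rw [← Real.exp_nat_mul]; ring_nf
  refine Integrable.mono' ((exp_neg_integrableOn_Ioi 0 (by positivity : 0 < 2 * c)).mul_const ‖D‖)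
    (continuous_lyapunovIntegrand_apply A D i j).aestronglyMeasurable ?_
  filter_upwards [ae_restrict_mem measurableSet_Ioi] with t ht
  exact hbound t (le_of_lt ht)

theorem lyapunov_sub_truncation_eq {A D X Xτ : Matrix m m ℝ} (hA : A.PosDef) {τ : ℝ}
    (hτ : 0 ≤ τ) (hX : ∀ i j, X i j = ∫ t in Ioi 0, lyapunovIntegrand A D t i j)
    (hXτ : ∀ i j, Xτ i j = ∫ t in Ioc 0 τ, lyapunovIntegrand A D t i j) :
    X - Xτ = NormedSpace.exp (-(τ • A)) * X * NormedSpace.exp (-(τ • A)) := by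
  have hint := integrableOn_lyapunovIntegrand_apply hA D
  have hXof : X = of fun k l => ∫ t in Ioi 0, lyapunovIntegrand A D t k l := Matrix.ext hX
  ext i j
  have hshift : ∫ t in Ioi τ, lyapunovIntegrand A D t i j =
      ∫ s in Ioi 0, lyapunovIntegrand A D (s + τ) i j := by
    rw [setIntegral_Ioi_comp_add_right (fun t => lyapunovIntegrand A D t i j), zero_add]
  rw [Matrix.sub_apply, hX, hXτ, ← intervalIntegral.integral_of_le hτ,
    ← intervalIntegral.integral_interval_add_Ioi (hint i j)
      ((hint i j).mono_set (Ioi_subset_Ioi hτ)), add_sub_cancel_left, hshift]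
  simp_rw [lyapunovIntegrand_add]
  rw [integral_mul_mul_apply _ _ hint, ← hXof]

end Lyapunov

theorem lyapunov_truncation_bounds_general {n : ℕ}
    (A D X Xτ : Matrix (Fin n) (Fin n) ℝ) (hA : A.PosDef)
    (τ : ℝ) (hτ : 0 < τ)
    (hX : ∀ i j : Fin n, X i j =
      ∫ t in Set.Ioi (0 : ℝ),
        (NormedSpace.exp (-(t • A)) * D * NormedSpace.exp (-(t • A))) i j)
    (hXτ : ∀ i j : Fin n, Xτ i j =
      ∫ t in Set.Ioc (0 : ℝ) τ,
        (NormedSpace.exp (-(t • A)) * D * NormedSpace.exp (-(t • A))) i j) :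
    Real.exp (-2 * τ * sSup (spectrum ℝ A)) * l2Norm X ≤ l2Norm (X - Xτ) ∧
    l2Norm (X - Xτ) ≤ Real.exp (-2 * τ * sInf (spectrum ℝ A)) * l2Norm X := by
  have hA' : IsSelfAdjoint A := hA.isHermitian.isSelfAdjoint
  have hspec := A.finite_real_spectrum
  set E := NormedSpace.exp (-(τ • A))
  have hE : ‖E‖ ≤ Real.exp (-(τ * sInf (spectrum ℝ A))) :=
    hA'.norm_exp_neg_smul_le hτ.le fun x hx => csInf_le hspec.bddBelow hx
  have hEinv : ‖NormedSpace.exp (τ • A)‖ ≤ Real.exp (τ * sSup (spectrum ℝ A)) :=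
    hA'.norm_exp_smul_le fun x hx => mul_le_mul_of_nonneg_left (le_csSup hspec.bddAbove hx) hτ.le
  change _ * ‖X‖ ≤ ‖X - Xτ‖ ∧ ‖X - Xτ‖ ≤ _ * ‖X‖
  rw [lyapunov_sub_truncation_eq hA hτ.le hX hXτ]
  constructor
  · have hX_le := norm_le_sq_mul_norm_mul_mul (Matrix.exp_mul_exp_neg (τ • A))
      (by simpa using Matrix.exp_mul_exp_neg (-(τ • A))) hEinv X
    calc Real.exp (-2 * τ * sSup (spectrum ℝ A)) * ‖X‖
        ≤ Real.exp (-2 * τ * sSup (spectrum ℝ A)) *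
          (Real.exp (τ * sSup (spectrum ℝ A)) ^ 2 * ‖E * X * E‖) := by gcongr
      _ = ‖E * X * E‖ := by
        rw [← mul_assoc, ← Real.exp_nat_mul, ← Real.exp_add]
        ring_nf
        simp
  · calc ‖E * X * E‖ ≤ Real.exp (-(τ * sInf (spectrum ℝ A))) ^ 2 * ‖X‖ :=
          norm_mul_mul_le_of_norm_le hE X
      _ = Real.exp (-2 * τ * sInf (spectrum ℝ A)) * ‖X‖ := by rw [← Real.exp_nat_mul]; ring_nf

/-- Two-sided bound on the truncation error `X - X(τ)` of the Lyapunov solution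
`X = ∫_0^∞ e^{-tA} D e^{-tA} dt`, in the spectral norm:
`e^{-2τ λ_max} ‖X‖ ≤ ‖X - X(τ)‖ ≤ e^{-2τ λ_min} ‖X‖`. -/
theorem lyapunov_truncation_bounds {n : ℕ}
    (A D X Xτ : Matrix (Fin n) (Fin n) ℝ) (hA : A.PosDef) (hD : D.IsSymm)
    (τ : ℝ) (hτ : 0 < τ)
    (hX : ∀ i j : Fin n, X i j =
      ∫ t in Set.Ioi (0 : ℝ),
        (NormedSpace.exp (-(t • A)) * D * NormedSpace.exp (-(t • A))) i j)
    (hXτ : ∀ i j : Fin n, Xτ i j =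
      ∫ t in Set.Ioc (0 : ℝ) τ,
        (NormedSpace.exp (-(t • A)) * D * NormedSpace.exp (-(t • A))) i j) :
    Real.exp (-2 * τ * sSup (spectrum ℝ A)) * l2Norm X ≤ l2Norm (X - Xτ) ∧
    l2Norm (X - Xτ) ≤ Real.exp (-2 * τ * sInf (spectrum ℝ A)) * l2Norm X :=
  lyapunov_truncation_bounds_general A D X Xτ hA τ hτ hX hXτ
end

section
/- Let A^{-1}V_m = V_m H_m + v_{m+1} h_{m+1,m} e_m^T be an Arnoldi relation for A^{-1} with V_m having orthonormal columns, H_m invertible, and v_{m+1} orthogonal to the columns of V_m with unit norm. Let η = ‖(I − V_m V_m^T) A v_{m+1}‖ and assume η ≠ 0, and set v̂ = (I − V_m V_m^T) A v_{m+1}/η. Then A V_m = [V_m, v̂] G_m where G_m = [[I_m, V_m^T A v_{m+1}],[0, η]] · [[H_m^{-1}],[−h_{m+1,m} e_m^T H_m^{-1}]], and [V_m, v̂] has orthonormal columns. -/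
/-!
Multiplying the Arnoldi relation for `A⁻¹` by `A` on the left and by `H_m⁻¹` on the right gives
`A V_m = V_m H_m⁻¹ - h_{m+1,m} A v_{m+1} e_mᵀ H_m⁻¹`. Splitting `A v_{m+1}` into its component
`V_m V_mᵀ A v_{m+1}` in `range V_m` and the orthogonal residual `η v̂` turns this into the block
factorisation; `v̂` is a unit vector orthogonal to `range V_m`, so `[V_m, v̂]` has orthonormal columns.
-/

/-- The row vector `e_mᵀ ∈ ℝ^{1 × m}` (the transpose of the last canonical basis
vector). -/
def lastBasisRow (m : ℕ) : Matrix (Fin 1) (Fin m) ℝ :=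
  Matrix.of fun _ j => if (j : ℕ) = m - 1 then (1 : ℝ) else 0

namespace Matrix

variable {ι κ ο R : Type*} [Fintype ι]

theorem mul_eq_of_nonsing_inv_mul_eq [Fintype κ] [DecidableEq ι] [DecidableEq κ] [CommRing R]
    {A : Matrix ι ι R} {H : Matrix κ κ R} {V E : Matrix ι κ R}
    (hA : IsUnit A.det) (hH : IsUnit H.det) (hrel : A⁻¹ * V = V * H + E) :
    A * V = (V - A * E) * H⁻¹ := by
  have hAVH : A * V * H = V - A * E := by
    rw [eq_sub_iff_add_eq, Matrix.mul_assoc, ← Matrix.mul_add, ← hrel, ← Matrix.mul_assoc,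
      mul_nonsing_inv A hA, Matrix.one_mul]
  rw [← hAVH, Matrix.mul_assoc, mul_nonsing_inv H hH, Matrix.mul_one]

theorem transpose_mul_sub_mul_transpose_mul_eq_zero [Fintype κ] [DecidableEq κ] [CommRing R]
    {V : Matrix ι κ R} (hV : Vᵀ * V = 1) (x : Matrix ι ο R) :
    Vᵀ * (x - V * (Vᵀ * x)) = 0 := by
  rw [Matrix.mul_sub, ← Matrix.mul_assoc, hV, Matrix.one_mul, sub_self]

theorem transpose_mul_self_eq_one_of_normalize (w : Matrix ι (Fin 1) ℝ) {η : ℝ}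
    (hη : η = √(∑ i, w i 0 ^ 2)) (hη0 : η ≠ 0) :
    (η⁻¹ • w)ᵀ * (η⁻¹ • w) = 1 := by
  have hsq : η ^ 2 = ∑ i, w i 0 ^ 2 := by
    rw [hη, Real.sq_sqrt (Finset.sum_nonneg fun i _ => sq_nonneg _)]
  ext i j
  rw [Subsingleton.elim i 0, Subsingleton.elim j 0]
  simp only [Matrix.mul_apply, transpose_apply, smul_apply, smul_eq_mul, ← sq, mul_pow,
    ← Finset.mul_sum, ← hsq, inv_pow, one_apply_eq]
  exact inv_mul_cancel₀ (pow_ne_zero 2 hη0)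

theorem fromCols_transpose_mul_fromCols_eq_one [Fintype ο] [DecidableEq κ] [DecidableEq ο]
    [CommRing R]     {V : Matrix ι κ R} {u : Matrix ι ο R}
    (hV : Vᵀ * V = 1) (hu : uᵀ * u = 1) (hVu : Vᵀ * u = 0) :
    (fromCols V u)ᵀ * fromCols V u = 1 := by
  have huV : uᵀ * V = 0 := by
    rw [← transpose_transpose (uᵀ * V), transpose_mul, transpose_transpose, hVu, transpose_zero]
  rw [transpose_fromCols, fromRows_mul_fromCols, hV, hu, hVu, huV, fromBlocks_one]

end Matrix

theorem arnoldi_relation_for_A_general {n m : ℕ}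
    (A : Matrix (Fin n) (Fin n) ℝ) (hAdet : IsUnit A.det)
    (V : Matrix (Fin n) (Fin m) ℝ) (H : Matrix (Fin m) (Fin m) ℝ)
    (v : Matrix (Fin n) (Fin 1) ℝ) (h : ℝ)
    (hHdet : IsUnit H.det)
    (hVorth : V.transpose * V = 1)
    (hArnoldi : A⁻¹ * V = V * H + h • (v * lastBasisRow m))
    (η : ℝ)
    (hη : η = Real.sqrt (∑ i, ((A * v - V * (V.transpose * (A * v))) i 0) ^ 2))
    (hη0 : η ≠ 0)
    (vhat : Matrix (Fin n) (Fin 1) ℝ)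
    (hvhat : vhat = η⁻¹ • (A * v - V * (V.transpose * (A * v)))) :
    A * V = Matrix.fromCols V vhat *
        (Matrix.fromBlocks (1 : Matrix (Fin m) (Fin m) ℝ) (V.transpose * (A * v))
            (0 : Matrix (Fin 1) (Fin m) ℝ) (η • (1 : Matrix (Fin 1) (Fin 1) ℝ)) *
          Matrix.fromRows H⁻¹ (-(h • (lastBasisRow m * H⁻¹)))) ∧
      (Matrix.fromCols V vhat).transpose * Matrix.fromCols V vhat = 1 := by
  have hAv :
      V * (V.transpose * (A * v)) + vhat * (η • (1 : Matrix (Fin 1) (Fin 1) ℝ)) = A * v := by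
    rw [Matrix.mul_smul, Matrix.mul_one, hvhat, smul_smul, mul_inv_cancel₀ hη0, one_smul,
      add_sub_cancel]
  constructor
  · rw [← Matrix.mul_assoc, Matrix.fromCols_mul_fromBlocks, Matrix.mul_one, Matrix.mul_zero,
      add_zero, hAv, Matrix.fromCols_mul_fromRows,
      Matrix.mul_eq_of_nonsing_inv_mul_eq hAdet hHdet hArnoldi]
    simp only [Matrix.sub_mul, Matrix.mul_neg, Matrix.mul_smul, Matrix.smul_mul,
      Matrix.mul_assoc, ← sub_eq_add_neg]
  · have hVvhat : V.transpose * vhat = 0 := by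
      rw [hvhat, Matrix.mul_smul, Matrix.transpose_mul_sub_mul_transpose_mul_eq_zero hVorth,
        smul_zero]
    exact Matrix.fromCols_transpose_mul_fromCols_eq_one hVorth
      (hvhat ▸ Matrix.transpose_mul_self_eq_one_of_normalize _ hη hη0) hVvhat

/-- Arnoldi-type relation for `A` derived from the Arnoldi relation for `A⁻¹`
on the Krylov space `K_m(A⁻¹, v)`:
`A V_m = [V_m, v̂] G_m`, with `[V_m, v̂]` having orthonormal columns. -/
theorem arnoldi_relation_for_A {n m : ℕ} (hm : 0 < m)
    (A : Matrix (Fin n) (Fin n) ℝ) (hA : A.PosDef) (hAdet : IsUnit A.det)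
    (V : Matrix (Fin n) (Fin m) ℝ) (H : Matrix (Fin m) (Fin m) ℝ)
    (v : Matrix (Fin n) (Fin 1) ℝ) (h : ℝ)
    (hHdet : IsUnit H.det)
    (hVorth : V.transpose * V = 1)
    (hvnorm : v.transpose * v = 1)
    (hVv : V.transpose * v = 0)
    (hArnoldi : A⁻¹ * V = V * H + h • (v * lastBasisRow m))
    (η : ℝ)
    (hη : η = Real.sqrt (∑ i, ((A * v - V * (V.transpose * (A * v))) i 0) ^ 2))
    (hη0 : η ≠ 0)
    (vhat : Matrix (Fin n) (Fin 1) ℝ)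
    (hvhat : vhat = η⁻¹ • (A * v - V * (V.transpose * (A * v)))) :
    A * V = Matrix.fromCols V vhat *
        (Matrix.fromBlocks (1 : Matrix (Fin m) (Fin m) ℝ) (V.transpose * (A * v))
            (0 : Matrix (Fin 1) (Fin m) ℝ) (η • (1 : Matrix (Fin 1) (Fin 1) ℝ)) *
          Matrix.fromRows H⁻¹ (-(h • (lastBasisRow m * H⁻¹)))) ∧
      (Matrix.fromCols V vhat).transpose * Matrix.fromCols V vhat = 1 :=
  arnoldi_relation_for_A_general A hAdet V H v h hHdet hVorth hArnoldi η hη hη0 vhat hvhat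
end

section
/- Let A, B be n×n matrices with bandwidths β_A, β_B and D a matrix with bandwidth β_D. If the matrix-oriented CG iteration is applied to the Sylvester equation AX+XB=D with X_0=0 (so R_0=P_0=D and W_k = AP_{k-1}+P_{k-1}B), then for all k: β_{W_k} ≤ k·max(β_A,β_B)+β_D, β_{X_k} ≤ (k−1)·max(β_A,β_B)+β_D, β_{R_k} ≤ k·max(β_A,β_B)+β_D, and β_{P_k} ≤ k·max(β_A,β_B)+β_D. -/
namespace Matrix

lemma IsBanded.mono_s19 {n : ℕ} {β β' : ℕ} {M : Matrix (Fin n) (Fin n) ℝ}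
    (h : β ≤ β') (hM : M.IsBanded β) : M.IsBanded β' := by
  intro i j hij
  exact hM i j (lt_of_le_of_lt (by exact_mod_cast h) hij)

lemma IsBanded.add_s19 {n : ℕ} {β : ℕ} {M N : Matrix (Fin n) (Fin n) ℝ}
    (hM : M.IsBanded β) (hN : N.IsBanded β) : (M + N).IsBanded β := by
  intro i j hij
  simp [Matrix.add_apply, hM i j hij, hN i j hij]

lemma IsBanded.sub_s19 {n : ℕ} {β : ℕ} {M N : Matrix (Fin n) (Fin n) ℝ}
    (hM : M.IsBanded β) (hN : N.IsBanded β) : (M - N).IsBanded β := by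
  intro i j hij
  simp [Matrix.sub_apply, hM i j hij, hN i j hij]

lemma IsBanded.smul_s19 {n : ℕ} {β : ℕ} {c : ℝ} {M : Matrix (Fin n) (Fin n) ℝ}
    (hM : M.IsBanded β) : (c • M).IsBanded β := by
  intro i j hij
  simp [Matrix.smul_apply, hM i j hij]

lemma IsBanded.mul_s19 {n : ℕ} {β γ : ℕ} {M N : Matrix (Fin n) (Fin n) ℝ}
    (hM : M.IsBanded β) (hN : N.IsBanded γ) : (M * N).IsBanded (β + γ) := by
  intro i j hij
  rw [Matrix.mul_apply]
  apply Finset.sum_eq_zero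
  intro k _
  by_cases hk : (β : ℤ) < |(i : ℤ) - (k : ℤ)|
  · simp [hM i k hk]
  · have hk2 : (γ : ℤ) < |(k : ℤ) - (j : ℤ)| := by
      push_neg at hk
      have := abs_sub_abs_le_abs_sub ((i : ℤ) - j) ((i : ℤ) - k)
      have h3 : (i : ℤ) - j - ((i : ℤ) - k) = (k : ℤ) - j := by ring
      rw [h3] at this
      push_cast at hij ⊢
      omega
    simp [hN k j hk2]

end Matrix

/-- Bandedness of the iterates of the matrix-oriented CG method applied to the
Sylvester equation `A X + X B = D` with initial guess `X₀ = 0`. -/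
theorem cg_sylvester_iterates_banded {n : ℕ} (βA βB βD : ℕ)
    (A B D : Matrix (Fin n) (Fin n) ℝ)
    (hAband : Matrix.IsBanded βA A) (hBband : Matrix.IsBanded βB B)
    (hDband : Matrix.IsBanded βD D)
    (W X R P : ℕ → Matrix (Fin n) (Fin n) ℝ) (α β : ℕ → ℝ)
    (hX0 : X 0 = 0) (hR0 : R 0 = D) (hP0 : P 0 = D)
    (hW : ∀ k, W (k + 1) = A * P k + P k * B)
    (hX : ∀ k, X (k + 1) = X k + α (k + 1) • P k)
    (hR : ∀ k, R (k + 1) = R k - α (k + 1) • W (k + 1))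
    (hP : ∀ k, P (k + 1) = R (k + 1) + β (k + 1) • P k) :
    ∀ k : ℕ, 1 ≤ k →
      Matrix.IsBanded (k * max βA βB + βD) (W k) ∧
      Matrix.IsBanded ((k - 1) * max βA βB + βD) (X k) ∧
      Matrix.IsBanded (k * max βA βB + βD) (R k) ∧
      Matrix.IsBanded (k * max βA βB + βD) (P k) := by
  have hA' : Matrix.IsBanded (max βA βB) A := hAband.mono_s19 (le_max_left _ _)
  have hB' : Matrix.IsBanded (max βA βB) B := hBband.mono_s19 (le_max_right _ _)
  have hle : ∀ a b : ℕ, a ≤ b → a * max βA βB + βD ≤ b * max βA βB + βD := by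
    intro a b h
    have := Nat.mul_le_mul_right (max βA βB) h
    omega
  intro k hk
  induction k with
  | zero => omega
  | succ k ih =>
    rcases Nat.eq_zero_or_pos k with rfl | hk1
    · -- base case k = 1
      have hW1 : Matrix.IsBanded (1 * max βA βB + βD) (W 1) := by
        rw [hW 0, hP0]
        exact ((hA'.mul_s19 hDband).add_s19 ((hDband.mul_s19 hB').mono_s19 (by omega))).mono_s19 (by omega)
      refine ⟨hW1, ?_, ?_, ?_⟩
      · rw [hX 0, hX0, hP0]
        intro i j hij
        have h2 : (βD : ℤ) < |(i : ℤ) - (j : ℤ)| := by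
          have : ((0 + 1 - 1) * max βA βB + βD : ℕ) = βD := by omega
          rwa [this] at hij
        simp [Matrix.add_apply, Matrix.smul_apply, hDband i j h2]
      · rw [hR 0, hR0]
        exact (hDband.mono_s19 (by omega)).sub_s19 hW1.smul_s19
      · rw [hP 0, hR 0, hR0, hP0]
        exact ((hDband.mono_s19 (by omega)).sub_s19 hW1.smul_s19).add_s19 (hDband.mono_s19 (by omega)).smul_s19
    · obtain ⟨hWk, hXk, hRk, hPk⟩ := ih hk1
      have hW1 : Matrix.IsBanded ((k + 1) * max βA βB + βD) (W (k + 1)) := by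
        rw [hW k]
        exact ((hA'.mul_s19 hPk).mono_s19 (by ring_nf; omega)).add_s19
          ((hPk.mul_s19 hB').mono_s19 (by ring_nf; omega))
      have hR1 : Matrix.IsBanded ((k + 1) * max βA βB + βD) (R (k + 1)) := by
        rw [hR k]
        exact (hRk.mono_s19 (hle k (k+1) (by omega))).sub_s19 hW1.smul_s19
      refine ⟨hW1, ?_, hR1, ?_⟩
      · rw [hX k]
        exact (hXk.mono_s19 (hle (k-1) (k+1-1) (by omega))).add_s19
          (hPk.smul_s19.mono_s19 (hle k (k+1-1) (by omega)))
      · rw [hP k]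
        exact hR1.add_s19 (hPk.smul_s19.mono_s19 (hle k (k+1) (by omega)))
end
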